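/- arXiv:2207.11932 — 2 statements merged into one kernel-verified Lean document; each statement's English description precedes it below -/
import Mathlib

section
/- Let (Ω, ℱ, P) be a probability space, 𝒢 ⊆ ℱ a sub-σ-algebra, and A ∈ ℱ an event. Let Y : Ω → ℝ be a bounded random variable such that Y and the indicator 1_A are conditionally independent given 𝒢, and let e be a 𝒢-measurable version of E[1_A | 𝒢] with e ≥ ξ almost surely for some ξ > 0. Then E[ 1_A · Y / e ] = E[Y]. -/
open MeasureTheory ProbabilityTheory Filter Set Topology

/-- Unbiasedness of the generalized IPW estimator: `E[1_A·Y/e] = E[Y]`. -/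
theorem stmt_2 {Ω : Type*} (𝒢 : MeasurableSpace Ω) {mΩ : MeasurableSpace Ω} [StandardBorelSpace Ω]
    (P : Measure Ω) [IsProbabilityMeasure P]
    (h𝒢 : 𝒢 ≤ mΩ)
    (A : Set Ω) (hA : MeasurableSet A)
    (Y : Ω → ℝ) (hY : Measurable Y) (M : ℝ) (hYbd : ∀ ω, |Y ω| ≤ M)
    (hCI : CondIndepFun 𝒢 h𝒢 Y (A.indicator fun _ => (1 : ℝ)) P)
    (e : Ω → ℝ) (hem : Measurable[𝒢] e)
    (he : e =ᵐ[P] P[A.indicator fun _ => (1 : ℝ)|𝒢])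
    (ξ : ℝ) (hξ : 0 < ξ) (heξ : ∀ᵐ ω ∂P, ξ ≤ e ω) :
    ∫ ω, A.indicator (fun _ => (1 : ℝ)) ω * Y ω / e ω ∂P = ∫ ω, Y ω ∂P := by
  classical
  have hΩ : Nonempty Ω := by
    by_contra h
    rw [not_nonempty_iff] at h
    have h1 : P Set.univ = 1 := measure_univ
    rw [Set.univ_eq_empty_iff.2 h, measure_empty] at h1
    exact zero_ne_one h1
  obtain ⟨ω₀⟩ := hΩ
  have hA' : MeasurableSet[mΩ] A := hA
  have hY' : Measurable[mΩ] Y := hY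
  have hM0 : 0 ≤ M := le_trans (abs_nonneg _) (hYbd ω₀)
  set g : Ω → ℝ := A.indicator fun _ => (1 : ℝ) with hgdef
  have hgm : Measurable[mΩ] g := measurable_const.indicator hA'
  have hgbd : ∀ ω, ‖g ω‖ ≤ 1 := by
    intro ω
    by_cases hω : ω ∈ A <;> simp [g, Set.indicator_apply, hω]
  have hem' : Measurable[mΩ] e := fun s hs => h𝒢 _ (hem hs)
  have hvm : Measurable[mΩ] fun ω => (e ω)⁻¹ := hem'.inv
  have hvG : StronglyMeasurable[𝒢] fun ω => (e ω)⁻¹ := (Measurable.inv hem).stronglyMeasurable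
  have hvbd : ∀ᵐ ω ∂P, ‖(e ω)⁻¹‖ ≤ ξ⁻¹ := by
    filter_upwards [heξ] with ω h
    rw [Real.norm_eq_abs, abs_of_nonneg (inv_nonneg.2 (le_trans hξ.le h))]
    exact inv_anti₀ hξ h
  have hve : ∀ᵐ ω ∂P, (e ω)⁻¹ * e ω = 1 := by
    filter_upwards [heξ] with ω h
    exact inv_mul_cancel₀ (lt_of_lt_of_le hξ h).ne'
  -- integrability helper
  have hint : ∀ (h : Ω → ℝ) (C : ℝ), AEStronglyMeasurable[mΩ] h P → (∀ᵐ ω ∂P, ‖h ω‖ ≤ C) →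
      Integrable h P := fun h C hm hb => (integrable_const C).mono' hm hb
  have hintv : ∀ (h : Ω → ℝ) (C : ℝ), Measurable[mΩ] h → (∀ᵐ ω ∂P, ‖h ω‖ ≤ C) →
      Integrable (fun ω => (e ω)⁻¹ * h ω) P := by
    intro h C hm hb
    refine hint _ (ξ⁻¹ * C) (hvm.mul hm).aestronglyMeasurable ?_
    filter_upwards [hvbd, hb] with ω h1 h2
    rw [norm_mul]
    exact mul_le_mul h1 h2 (norm_nonneg _) (inv_nonneg.2 hξ.le)
  -- pull-out property
  have pull : ∀ (h : Ω → ℝ) (C : ℝ), Measurable[mΩ] h → (∀ᵐ ω ∂P, ‖h ω‖ ≤ C) →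
      ∫ ω, (e ω)⁻¹ * h ω ∂P = ∫ ω, (e ω)⁻¹ * (P[h|𝒢]) ω ∂P := by
    intro h C hm hb
    have hh : Integrable h P := hint h C hm.aestronglyMeasurable hb
    have hvh : Integrable (fun ω => (e ω)⁻¹ * h ω) P := hintv h C hm hb
    have hmul :=
      condExp_mul_of_stronglyMeasurable_left (μ := P) (m := 𝒢) (g := h) hvG hvh hh
    calc ∫ ω, (e ω)⁻¹ * h ω ∂P
        = ∫ ω, (P[fun ω => (e ω)⁻¹ * h ω|𝒢]) ω ∂P := (integral_condExp h𝒢 (f := fun ω => (e ω)⁻¹ * h ω)).symm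
      _ = ∫ ω, (e ω)⁻¹ * (P[h|𝒢]) ω ∂P := integral_congr_ae hmul
  -- indicator norm bound
  have hindbd : ∀ (S : Set Ω) (ω : Ω), ‖S.indicator (fun _ => (1 : ℝ)) ω‖ ≤ 1 := by
    intro S ω
    by_cases hω : ω ∈ S <;> simp [Set.indicator_apply, hω]
  have hAg : g ⁻¹' {1} = A := by
    ext ω
    by_cases hω : ω ∈ A <;> simp [g, Set.indicator_apply, hω]
  -- indicator case of the main identity
  have hind : ∀ s : Set ℝ, MeasurableSet s →
      ∫ ω, (e ω)⁻¹ * (Y ⁻¹' s ∩ A).indicator (fun _ => (1 : ℝ)) ω ∂P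
        = ∫ ω, (Y ⁻¹' s).indicator (fun _ => (1 : ℝ)) ω ∂P := by
    intro s hs
    have hCI' := (condIndepFun_iff_condExp_inter_preimage_eq_mul (m' := 𝒢) (hm' := h𝒢) (μ := P) hY' hgm).mp hCI s {1} hs
      (measurableSet_singleton 1)
    rw [hAg] at hCI'
    have hintS : Integrable ((Y ⁻¹' s).indicator (fun _ => (1 : ℝ))) P :=
      hint _ 1 ((measurable_const.indicator ((hY' hs))).aestronglyMeasurable)
        (Eventually.of_forall (hindbd _))
    have step1 := pull ((Y ⁻¹' s ∩ A).indicator (fun _ => (1 : ℝ))) 1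
      (measurable_const.indicator (((hY' hs).inter hA')))
      (Eventually.of_forall (hindbd _))
    rw [step1]
    have step2 : ∫ ω, (e ω)⁻¹ * (P[(Y ⁻¹' s ∩ A).indicator (fun _ => (1 : ℝ))|𝒢]) ω ∂P
        = ∫ ω, (P[(Y ⁻¹' s).indicator (fun _ => (1 : ℝ))|𝒢]) ω ∂P := by
      refine integral_congr_ae ?_
      filter_upwards [hCI', he, hve] with ω h1 h2 h3
      rw [h1, ← h2]
      calc (e ω)⁻¹ * ((P[(Y ⁻¹' s).indicator fun _ => (1:ℝ)|𝒢]) ω * e ω)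
          = ((e ω)⁻¹ * e ω) * (P[(Y ⁻¹' s).indicator fun _ => (1:ℝ)|𝒢]) ω := by ring
        _ = (P[(Y ⁻¹' s).indicator fun _ => (1:ℝ)|𝒢]) ω := by rw [h3, one_mul]
    rw [step2, integral_condExp h𝒢]
  -- identity for simple functions composed with Y
  have hsimple : ∀ φ : SimpleFunc ℝ ℝ,
      ∫ ω, (e ω)⁻¹ * (g ω * φ (Y ω)) ∂P = ∫ ω, φ (Y ω) ∂P := by
    intro φ
    induction φ using SimpleFunc.induction with
    | @const c s hs =>
      have hpt : ∀ ω, g ω * (SimpleFunc.piecewise s hs (SimpleFunc.const ℝ c)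
          (SimpleFunc.const ℝ 0)) (Y ω)
          = c * (Y ⁻¹' s ∩ A).indicator (fun _ => (1 : ℝ)) ω := by
        intro ω
        by_cases hωA : ω ∈ A <;> by_cases hωs : Y ω ∈ s <;>
          simp [g, Set.indicator_apply, hωA, hωs]
      have hpt2 : ∀ ω, (SimpleFunc.piecewise s hs (SimpleFunc.const ℝ c)
          (SimpleFunc.const ℝ 0)) (Y ω)
          = c * (Y ⁻¹' s).indicator (fun _ => (1 : ℝ)) ω := by
        intro ω
        by_cases hωs : Y ω ∈ s <;> simp [Set.indicator_apply, hωs]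
      calc ∫ ω, (e ω)⁻¹ * (g ω * (SimpleFunc.piecewise s hs (SimpleFunc.const ℝ c)
              (SimpleFunc.const ℝ 0)) (Y ω)) ∂P
          = ∫ ω, c * ((e ω)⁻¹ * (Y ⁻¹' s ∩ A).indicator (fun _ => (1 : ℝ)) ω) ∂P := by
            refine integral_congr_ae (Eventually.of_forall fun ω => ?_)
            simp only [hpt]; ring
        _ = c * ∫ ω, (e ω)⁻¹ * (Y ⁻¹' s ∩ A).indicator (fun _ => (1 : ℝ)) ω ∂P :=
            integral_const_mul _ _
        _ = c * ∫ ω, (Y ⁻¹' s).indicator (fun _ => (1 : ℝ)) ω ∂P := by rw [hind s hs]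
        _ = ∫ ω, c * (Y ⁻¹' s).indicator (fun _ => (1 : ℝ)) ω ∂P :=
            (integral_const_mul _ _).symm
        _ = ∫ ω, (SimpleFunc.piecewise s hs (SimpleFunc.const ℝ c)
              (SimpleFunc.const ℝ 0)) (Y ω) ∂P := by
            refine integral_congr_ae (Eventually.of_forall fun ω => ?_)
            simp only [hpt2]
    | @add f₁ f₂ hdisj ih1 ih2 =>
      obtain ⟨C₁, hC₁⟩ := f₁.exists_forall_norm_le
      obtain ⟨C₂, hC₂⟩ := f₂.exists_forall_norm_le
      have hm1 : Measurable[mΩ] fun ω => f₁ (Y ω) := f₁.measurable.comp hY'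
      have hm2 : Measurable[mΩ] fun ω => f₂ (Y ω) := f₂.measurable.comp hY'
      have hi1 : Integrable (fun ω => f₁ (Y ω)) P :=
        hint _ C₁ hm1.aestronglyMeasurable (Eventually.of_forall fun ω => hC₁ _)
      have hi2 : Integrable (fun ω => f₂ (Y ω)) P :=
        hint _ C₂ hm2.aestronglyMeasurable (Eventually.of_forall fun ω => hC₂ _)
      have hbg1 : ∀ᵐ ω ∂P, ‖g ω * f₁ (Y ω)‖ ≤ 1 * C₁ :=
        Eventually.of_forall fun ω => by
          rw [norm_mul]
          exact mul_le_mul (hgbd ω) (hC₁ _) (norm_nonneg _) zero_le_one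
      have hbg2 : ∀ᵐ ω ∂P, ‖g ω * f₂ (Y ω)‖ ≤ 1 * C₂ :=
        Eventually.of_forall fun ω => by
          rw [norm_mul]
          exact mul_le_mul (hgbd ω) (hC₂ _) (norm_nonneg _) zero_le_one
      have hvi1 : Integrable (fun ω => (e ω)⁻¹ * (g ω * f₁ (Y ω))) P :=
        hintv _ (1 * C₁) (hgm.mul hm1) hbg1
      have hvi2 : Integrable (fun ω => (e ω)⁻¹ * (g ω * f₂ (Y ω))) P :=
        hintv _ (1 * C₂) (hgm.mul hm2) hbg2
      calc ∫ ω, (e ω)⁻¹ * (g ω * (f₁ + f₂) (Y ω)) ∂P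
          = ∫ ω, ((e ω)⁻¹ * (g ω * f₁ (Y ω)) + (e ω)⁻¹ * (g ω * f₂ (Y ω))) ∂P := by
            refine integral_congr_ae (Eventually.of_forall fun ω => ?_)
            simp only [SimpleFunc.coe_add, Pi.add_apply]
            ring
        _ = (∫ ω, (e ω)⁻¹ * (g ω * f₁ (Y ω)) ∂P) + ∫ ω, (e ω)⁻¹ * (g ω * f₂ (Y ω)) ∂P :=
            integral_add hvi1 hvi2
        _ = (∫ ω, f₁ (Y ω) ∂P) + ∫ ω, f₂ (Y ω) ∂P := by rw [ih1, ih2]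
        _ = ∫ ω, (f₁ (Y ω) + f₂ (Y ω)) ∂P := (integral_add hi1 hi2).symm
        _ = ∫ ω, (f₁ + f₂) (Y ω) ∂P := by
            refine integral_congr_ae (Eventually.of_forall fun ω => ?_)
            simp
  -- approximation of Y by simple functions
  set φn : ℕ → SimpleFunc ℝ ℝ := fun n =>
    SimpleFunc.approxOn (id : ℝ → ℝ) measurable_id Set.univ 0 (Set.mem_univ 0) n with hφn
  have hφtend : ∀ x : ℝ, Tendsto (fun n => φn n x) atTop (𝓝 x) := by
    intro x
    simpa using SimpleFunc.tendsto_approxOn (f := (id : ℝ → ℝ)) measurable_id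
      (Set.mem_univ 0) (by simp)
  have hφbd : ∀ (n : ℕ) (x : ℝ), ‖φn n x‖ ≤ ‖x‖ + ‖x‖ := fun n x => by
    simpa using SimpleFunc.norm_approxOn_zero_le (f := (id : ℝ → ℝ)) measurable_id
      (Set.mem_univ 0) x n
  -- dominated convergence on both sides
  have hφm : ∀ n, Measurable[mΩ] fun ω => (φn n) (Y ω) := fun n => (φn n).measurable.comp hY'
  have hmeasn : ∀ n, AEStronglyMeasurable[mΩ] (fun ω => (e ω)⁻¹ * (g ω * (φn n) (Y ω))) P :=
    fun n => (hvm.mul (hgm.mul (hφm n))).aestronglyMeasurable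
  have hboundint : Integrable (fun _ : Ω => ξ⁻¹ * (1 * (M + M))) P := integrable_const _
  have h1 : Tendsto (fun n => ∫ ω, (e ω)⁻¹ * (g ω * (φn n) (Y ω)) ∂P) atTop
      (𝓝 (∫ ω, (e ω)⁻¹ * (g ω * Y ω) ∂P)) := by
    refine tendsto_integral_of_dominated_convergence (fun _ => ξ⁻¹ * (1 * (M + M)))
      hmeasn hboundint (fun n => ?_) ?_
    · filter_upwards [hvbd] with ω hv
      rw [norm_mul, norm_mul]
      refine mul_le_mul hv (mul_le_mul (hgbd ω) ?_ (norm_nonneg _) zero_le_one)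
        (mul_nonneg (norm_nonneg _) (norm_nonneg _)) (inv_nonneg.2 hξ.le)
      calc ‖(φn n) (Y ω)‖ ≤ ‖Y ω‖ + ‖Y ω‖ := hφbd n (Y ω)
        _ ≤ M + M := add_le_add (hYbd ω) (hYbd ω)
    · refine Eventually.of_forall fun ω => ?_
      exact (tendsto_const_nhds.mul (tendsto_const_nhds.mul (hφtend (Y ω))))
  have h2 : Tendsto (fun n => ∫ ω, (φn n) (Y ω) ∂P) atTop (𝓝 (∫ ω, Y ω ∂P)) := by
    refine tendsto_integral_of_dominated_convergence (fun _ => M + M)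
      (fun n => (hφm n).aestronglyMeasurable) (integrable_const _)
      (fun n => Eventually.of_forall fun ω => ?_) (Eventually.of_forall fun ω => hφtend (Y ω))
    calc ‖(φn n) (Y ω)‖ ≤ ‖Y ω‖ + ‖Y ω‖ := hφbd n (Y ω)
      _ ≤ M + M := add_le_add (hYbd ω) (hYbd ω)
  have heqn : (fun n => ∫ ω, (e ω)⁻¹ * (g ω * (φn n) (Y ω)) ∂P)
      = fun n => ∫ ω, (φn n) (Y ω) ∂P := funext fun n => hsimple (φn n)
  rw [heqn] at h1
  have hkey : ∫ ω, (e ω)⁻¹ * (g ω * Y ω) ∂P = ∫ ω, Y ω ∂P := tendsto_nhds_unique h1 h2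
  calc ∫ ω, A.indicator (fun _ => (1 : ℝ)) ω * Y ω / e ω ∂P
      = ∫ ω, (e ω)⁻¹ * (g ω * Y ω) ∂P := by
        refine integral_congr_ae (Eventually.of_forall fun ω => ?_)
        show A.indicator (fun _ => (1 : ℝ)) ω * Y ω / e ω
          = (e ω)⁻¹ * (A.indicator (fun _ => (1 : ℝ)) ω * Y ω)
        rw [div_eq_mul_inv, mul_comm]
    _ = ∫ ω, Y ω ∂P := hkey
end

section
/- Let (Ω, ℱ, P) be a probability space, 𝒢 ⊆ ℱ a sub-σ-algebra, and A ∈ ℱ an event. Let Y : Ω → ℝ be a bounded random variable, μ a bounded 𝒢-measurable function with E[1_A·(Y − μ) | 𝒢] = 0 almost surely, let e be a 𝒢-measurable version of E[1_A | 𝒢] with e ≥ ξ almost surely for some ξ > 0, and let m be a bounded 𝒢-measurable function. Then the AIPW transform satisfies E[ m + 1_A·(Y − m)/e ] = E[ μ ]. -/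
open MeasureTheory ProbabilityTheory Filter Set

lemma aipw_int_mul {Ω : Type*} {mΩ : MeasurableSpace Ω}
    (P : Measure Ω) [IsProbabilityMeasure P]
    (𝒢 : MeasurableSpace Ω) (h𝒢 : 𝒢 ≤ mΩ)
    (g f : Ω → ℝ) (hg : StronglyMeasurable[𝒢] g)
    (hf : Integrable f P) (hgf : Integrable (g * f) P) :
    ∫ ω, g ω * f ω ∂P = ∫ ω, g ω * (P[f|𝒢]) ω ∂P := by
  haveI : SigmaFinite (P.trim h𝒢) := inferInstance
  calc ∫ ω, g ω * f ω ∂P = ∫ ω, (P[g * f|𝒢]) ω ∂P := (integral_condExp h𝒢).symm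
    _ = ∫ ω, g ω * (P[f|𝒢]) ω ∂P :=
      integral_congr_ae (condExp_mul_of_stronglyMeasurable_left hg hgf hf)

/-- The oracle-propensity AIPW moment targets `E[μ]` for any postulated outcome model `m`. -/
theorem stmt_19 {Ω : Type*} (𝒢 : MeasurableSpace Ω) {mΩ : MeasurableSpace Ω}
    (P : Measure Ω) [IsProbabilityMeasure P]
    (h𝒢 : 𝒢 ≤ mΩ)
    (A : Set Ω) (hA : MeasurableSet A)
    (Y : Ω → ℝ) (hY : Measurable Y) (M : ℝ) (hYbd : ∀ ω, |Y ω| ≤ M)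
    (μ : Ω → ℝ) (hμm : Measurable[𝒢] μ) (Cμ : ℝ) (hμbd : ∀ ω, |μ ω| ≤ Cμ)
    (hzero : P[fun ω => A.indicator (fun _ => (1 : ℝ)) ω * (Y ω - μ ω)|𝒢] =ᵐ[P] 0)
    (e : Ω → ℝ) (hem : Measurable[𝒢] e)
    (he : e =ᵐ[P] P[A.indicator fun _ => (1 : ℝ)|𝒢])
    (ξ : ℝ) (hξ : 0 < ξ) (heξ : ∀ᵐ ω ∂P, ξ ≤ e ω)
    (m : Ω → ℝ) (hmm : Measurable[𝒢] m) (Cm : ℝ) (hmbd : ∀ ω, |m ω| ≤ Cm) :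
    ∫ ω, (m ω + A.indicator (fun _ => (1 : ℝ)) ω * (Y ω - m ω) / e ω) ∂P
      = ∫ ω, μ ω ∂P := by
  -- modified propensity, bounded below everywhere
  set e' : Ω → ℝ := fun ω => max (e ω) ξ with he'def
  have he'pos : ∀ ω, 0 < e' ω := fun ω => lt_of_lt_of_le hξ (le_max_right _ _)
  have he'ξ : ∀ ω, ξ ≤ e' ω := fun ω => le_max_right _ _
  have he'inv : ∀ ω, |(e' ω)⁻¹| ≤ ξ⁻¹ := by
    intro ω
    rw [abs_of_pos (inv_pos.2 (he'pos ω))]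
    exact inv_anti₀ hξ (he'ξ ω)
  have he'e : e' =ᵐ[P] e := by
    filter_upwards [heξ] with ω hω
    simp [he'def, max_eq_left hω]
  have he'm : Measurable[𝒢] e' := hem.max measurable_const
  have lift : ∀ f : Ω → ℝ, Measurable[𝒢] f → Measurable[mΩ] f :=
    fun f hf s hs => h𝒢 _ (hf hs)
  have hIAm : Measurable[mΩ] (A.indicator (fun _ => (1 : ℝ))) :=
    measurable_const.indicator hA
  have hIAbd : ∀ ω, |A.indicator (fun _ => (1 : ℝ)) ω| ≤ 1 := by
    intro ω
    by_cases h : ω ∈ A <;> simp [Set.indicator_apply, h]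
  -- integrability helper
  have hint : ∀ (f : Ω → ℝ), Measurable[mΩ] f → ∀ (C : ℝ), (∀ ω, |f ω| ≤ C) → Integrable f P := by
    intro f hf C hC
    refine ⟨hf.aestronglyMeasurable, ?_⟩
    exact HasFiniteIntegral.of_bounded (ae_of_all _ hC)
  have hμmeas : Measurable[mΩ] μ := lift _ hμm
  have hmmeas : Measurable[mΩ] m := lift _ hmm
  have hemeas' : Measurable[mΩ] e' := lift _ he'm
  have hμint : Integrable μ P := hint μ hμmeas Cμ hμbd
  have hmint : Integrable m P := hint m hmmeas Cm hmbd
  -- f1 := 1_A (Y - μ)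
  set f1 : Ω → ℝ := fun ω => A.indicator (fun _ => (1 : ℝ)) ω * (Y ω - μ ω) with hf1def
  have hf1meas : Measurable[mΩ] f1 := hIAm.mul (hY.sub hμmeas)
  have hf1bd : ∀ ω, |f1 ω| ≤ M + Cμ := by
    intro ω
    calc |f1 ω| = |A.indicator (fun _ => (1 : ℝ)) ω| * |Y ω - μ ω| := abs_mul _ _
      _ ≤ 1 * (M + Cμ) := by
          apply mul_le_mul (hIAbd ω) ?_ (abs_nonneg _) zero_le_one
          calc |Y ω - μ ω| ≤ |Y ω| + |μ ω| := abs_sub _ _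
            _ ≤ M + Cμ := add_le_add (hYbd ω) (hμbd ω)
      _ = M + Cμ := one_mul _
  have hf1int : Integrable f1 P := hint f1 hf1meas _ hf1bd
  -- g := (e')⁻¹
  set g : Ω → ℝ := fun ω => (e' ω)⁻¹ with hgdef
  have hgm : Measurable[𝒢] g := he'm.inv
  have hgmeas : Measurable[mΩ] g := lift _ hgm
  have hgf1bd : ∀ ω, |g ω * f1 ω| ≤ ξ⁻¹ * (M + Cμ) := by
    intro ω
    rw [abs_mul]
    exact mul_le_mul (he'inv ω) (hf1bd ω) (abs_nonneg _)
      (le_of_lt (inv_pos.2 hξ))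
  have hgf1int : Integrable (fun ω => g ω * f1 ω) P :=
    hint _ (hgmeas.mul hf1meas) _ hgf1bd
  -- h := (e')⁻¹ (μ - m)
  set h : Ω → ℝ := fun ω => (e' ω)⁻¹ * (μ ω - m ω) with hhdef
  have hhm : Measurable[𝒢] h := he'm.inv.mul (hμm.sub hmm)
  have hhmeas : Measurable[mΩ] h := lift _ hhm
  have hhbd : ∀ ω, |h ω| ≤ ξ⁻¹ * (Cμ + Cm) := by
    intro ω
    rw [abs_mul]
    refine mul_le_mul (he'inv ω) ?_ (abs_nonneg _) (le_of_lt (inv_pos.2 hξ))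
    calc |μ ω - m ω| ≤ |μ ω| + |m ω| := abs_sub _ _
      _ ≤ Cμ + Cm := add_le_add (hμbd ω) (hmbd ω)
  have hIAint : Integrable (A.indicator (fun _ => (1 : ℝ))) P := hint _ hIAm 1 hIAbd
  have hhIAint : Integrable (fun ω => h ω * A.indicator (fun _ => (1 : ℝ)) ω) P := by
    refine hint _ (hhmeas.mul hIAm) (ξ⁻¹ * (Cμ + Cm) * 1) ?_
    intro ω
    rw [abs_mul]
    exact mul_le_mul (hhbd ω) (hIAbd ω) (abs_nonneg _)
      ((abs_nonneg (h ω)).trans (hhbd ω))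
  -- key integral identities
  have key1 : ∫ ω, g ω * f1 ω ∂P = 0 := by
    rw [aipw_int_mul P 𝒢 h𝒢 g f1 hgm.stronglyMeasurable hf1int hgf1int]
    rw [show (0 : ℝ) = ∫ ω, (0 : ℝ) ∂P by simp]
    apply integral_congr_ae
    filter_upwards [hzero] with ω hω
    simp only [hf1def] at hω ⊢
    rw [hω]
    simp
  have key2 : ∫ ω, h ω * A.indicator (fun _ => (1 : ℝ)) ω ∂P = ∫ ω, (μ ω - m ω) ∂P := by
    rw [aipw_int_mul P 𝒢 h𝒢 h _ hhm.stronglyMeasurable hIAint hhIAint]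
    apply integral_congr_ae
    filter_upwards [he, he'e] with ω hω hω'
    have hne : e ω ≠ 0 := by rw [← hω']; exact ne_of_gt (he'pos ω)
    rw [← hω, hhdef]
    simp only [hω']
    field_simp
  -- rewrite the LHS integrand
  have hsplit : (fun ω => m ω + A.indicator (fun _ => (1 : ℝ)) ω * (Y ω - m ω) / e ω)
      =ᵐ[P] fun ω => m ω + g ω * f1 ω + h ω * A.indicator (fun _ => (1 : ℝ)) ω := by
    filter_upwards [he'e] with ω hω
    rw [hgdef, hf1def, hhdef, ← hω]
    have hne : e' ω ≠ 0 := ne_of_gt (he'pos ω)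
    field_simp
    ring
  rw [integral_congr_ae hsplit]
  have hAdd1 : Integrable (fun ω => m ω + g ω * f1 ω) P := hmint.add hgf1int
  rw [integral_add hAdd1 hhIAint, integral_add hmint hgf1int]
  rw [key1, key2, integral_sub hμint hmint]
  ring
end
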